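/- Let σ and w be unit vectors in ℂ^N with ⟨w,σ⟩ = ⟨σ,w⟩ = x for some real 0 < x < 1, let E > 0 be real, set θ = arccos x and η = E·sin(2θ). Let H = 2iEx·(|w⟩⟨σ| − |σ⟩⟨w|). Then for every real t, exp(−iHt)·σ = (1/sin θ)·[sin(θ − ηt)·σ + sin(ηt)·w]. -/

import Mathlib

open scoped InnerProductSpace

/-- The outer product |u⟩⟨v| : the rank-one operator sending φ to ⟨v,φ⟩·u
(inner product conjugate-linear in the first argument). -/
noncomputable def outer {N : ℕ} (u v : EuclideanSpace ℂ (Fin N)) :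
    EuclideanSpace ℂ (Fin N) →L[ℂ] EuclideanSpace ℂ (Fin N) :=
  ContinuousLinearMap.toSpanSingleton ℂ u ∘L (innerSL ℂ v)

/-!
With `K = |w⟩⟨σ| - |σ⟩⟨w|` one has `K σ = w - x σ` and `K w = x w - σ`, so for
`u = (w - x σ) / sin θ` the operator `K` acts on the plane spanned by `σ` and `u` as the
generator of rotations: `K σ = sin θ • u` and `K u = -sin θ • σ`. For any operator `A` with
`A v = ω • u` and `A u = -ω • v`, the vectors `v ± i u` are eigenvectors of `A` with eigenvalues
`∓ i ω`, hence `exp A v = cos ω • v + sin ω • u`. Here `-i t H = 2 E x t • K`, so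
`ω = 2 E x t sin θ = E t sin (2θ) = η t`, and `sin (θ - η t) = sin θ cos (η t) - x sin (η t)`
turns `cos (η t) σ + sin (η t) u` into the claimed formula.
-/

section
variable {𝕂 E : Type*} [RCLike 𝕂] [NormedAddCommGroup E] [NormedSpace 𝕂 E]

theorem ContinuousLinearMap.pow_apply_of_apply_eq_smul {A : E →L[𝕂] E} {μ : 𝕂} {e : E}
    (h : A e = μ • e) (n : ℕ) : (A ^ n) e = μ ^ n • e := by
  induction n with
  | zero => simp
  | succ n ih => rw [pow_succ, mul_apply_eq_comp, h, map_smul, ih, smul_smul, pow_succ']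

theorem NormedSpace.exp_apply_of_apply_eq_smul [CompleteSpace E] {A : E →L[𝕂] E} {μ : 𝕂} {e : E}
    (h : A e = μ • e) : NormedSpace.exp A e = NormedSpace.exp μ • e := by
  have hA := (NormedSpace.exp_series_hasSum_exp' (𝕂 := 𝕂) A).mapL
    (ContinuousLinearMap.apply 𝕂 E e)
  have hμ := (NormedSpace.exp_series_hasSum_exp' (𝕂 := 𝕂) μ).smul_const e
  simp only [ContinuousLinearMap.apply_apply, smul_apply,
    ContinuousLinearMap.pow_apply_of_apply_eq_smul h, smul_smul] at hA hμ
  exact hA.unique hμ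
end

section
variable {E : Type*} [NormedAddCommGroup E] [NormedSpace ℂ E] [CompleteSpace E]

theorem NormedSpace.exp_apply_eq_cos_smul_add_sin_smul {A : E →L[ℂ] E} {v u : E} {ω : ℂ}
    (hv : A v = ω • u) (hu : A u = -ω • v) :
    NormedSpace.exp A v = Complex.cos ω • v + Complex.sin ω • u := by
  have hplus : A (v + Complex.I • u) = (-(ω * Complex.I)) • (v + Complex.I • u) := by
    rw [map_add, map_smul, hv, hu]
    linear_combination (norm := module) Complex.I_sq • ω • u
  have hminus : A (v - Complex.I • u) = (ω * Complex.I) • (v - Complex.I • u) := by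
    rw [map_sub, map_smul, hv, hu]
    linear_combination (norm := module) Complex.I_sq • ω • u
  have hsplit : v = (2 : ℂ)⁻¹ • ((v + Complex.I • u) + (v - Complex.I • u)) := by module
  rw [hsplit, map_smul, map_add, NormedSpace.exp_apply_of_apply_eq_smul hplus,
    NormedSpace.exp_apply_of_apply_eq_smul hminus, ← Complex.exp_eq_exp_ℂ,
    Complex.cos, Complex.sin, neg_mul]
  match_scalars <;> ring
end

theorem outer_apply {N : ℕ} (u v φ : EuclideanSpace ℂ (Fin N)) : outer u v φ = ⟪v, φ⟫_ℂ • u :=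
  rfl

theorem exp_smul_outer_sub_outer_apply {N : ℕ} {σ w : EuclideanSpace ℂ (Fin N)}
    (hσ : ‖σ‖ = 1) (hw : ‖w‖ = 1) {x s : ℂ} (hxs : x ^ 2 + s ^ 2 = 1) (hs : s ≠ 0)
    (hwσ : ⟪w, σ⟫_ℂ = x) (hσw : ⟪σ, w⟫_ℂ = x) (c : ℂ) :
    NormedSpace.exp (c • (outer w σ - outer σ w)) σ =
      Complex.cos (c * s) • σ + Complex.sin (c * s) • s⁻¹ • (w - x • σ) := by
  have hσσ : ⟪σ, σ⟫_ℂ = 1 := by simp [hσ]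
  have hww : ⟪w, w⟫_ℂ = 1 := by simp [hw]
  apply NormedSpace.exp_apply_eq_cos_smul_add_sin_smul
  · simp only [smul_apply, sub_apply, outer_apply, hσσ, hwσ, one_smul]
    match_scalars <;> field_simp
  · simp only [smul_apply, sub_apply, map_smul, map_sub, outer_apply, hσσ, hwσ, hσw, hww, one_smul]
    match_scalars
    · ring
    · field_simp
      linear_combination c * hxs

theorem stmt_5_general {N : ℕ} (σ w : EuclideanSpace ℂ (Fin N))
    (hσ : ‖σ‖ = 1) (hw : ‖w‖ = 1) (x : ℝ) (hx0 : 0 < x) (hx1 : x < 1)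
    (hwσ : ⟪w, σ⟫_ℂ = (x : ℂ)) (hσw : ⟪σ, w⟫_ℂ = (x : ℂ))
    (E : ℝ) (θ η : ℝ) (hθ : θ = Real.arccos x)
    (hη : η = E * Real.sin (2 * θ))
    (H : EuclideanSpace ℂ (Fin N) →L[ℂ] EuclideanSpace ℂ (Fin N))
    (hH : H = (2 * Complex.I * (E : ℂ) * (x : ℂ)) • (outer w σ - outer σ w))
    (t : ℝ) :
    NormedSpace.exp ((-(Complex.I * (t : ℂ))) • H) σ =
      (((Real.sin θ)⁻¹ : ℝ) : ℂ) •
        (((Real.sin (θ - η * t) : ℝ) : ℂ) • σ + ((Real.sin (η * t) : ℝ) : ℂ) • w) := by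
  have hcos : Real.cos θ = x := hθ ▸ Real.cos_arccos (by linarith) hx1.le
  have hsin : Real.sin θ ≠ 0 := hθ ▸ (Real.sin_pos_of_pos_of_lt_pi (Real.arccos_pos.2 hx1)
    (Real.arccos_lt_pi.2 (by linarith))).ne'
  have hηt : η * t = 2 * E * x * t * Real.sin θ := by
    rw [hη, Real.sin_two_mul, hcos]; ring
  have hexponent :
      (-(Complex.I * (t : ℂ))) • H = ((2 * E * x * t : ℝ) : ℂ) • (outer w σ - outer σ w) := by
    rw [hH, smul_smul]
    congr 1
    push_cast
    linear_combination (-2 * E * x * t : ℂ) * Complex.I_sq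
  have hxs : (x : ℂ) ^ 2 + (Real.sin θ : ℂ) ^ 2 = 1 := by
    exact_mod_cast hcos ▸ Real.cos_sq_add_sin_sq θ
  rw [hexponent, exp_smul_outer_sub_outer_apply hσ hw hxs (by exact_mod_cast hsin) hwσ hσw,
    Real.sin_sub, hcos, hηt]
  have hsinC : Complex.sin θ ≠ 0 := by exact_mod_cast hsin
  push_cast
  match_scalars
  · field_simp
    ring
  · field_simp

theorem stmt_5 {N : ℕ} (σ w : EuclideanSpace ℂ (Fin N))
    (hσ : ‖σ‖ = 1) (hw : ‖w‖ = 1) (x : ℝ) (hx0 : 0 < x) (hx1 : x < 1)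
    (hwσ : ⟪w, σ⟫_ℂ = (x : ℂ)) (hσw : ⟪σ, w⟫_ℂ = (x : ℂ))
    (E : ℝ) (hE : 0 < E) (θ η : ℝ) (hθ : θ = Real.arccos x)
    (hη : η = E * Real.sin (2 * θ))
    (H : EuclideanSpace ℂ (Fin N) →L[ℂ] EuclideanSpace ℂ (Fin N))
    (hH : H = (2 * Complex.I * (E : ℂ) * (x : ℂ)) • (outer w σ - outer σ w))
    (t : ℝ) :
    NormedSpace.exp ((-(Complex.I * (t : ℂ))) • H) σ =
      (((Real.sin θ)⁻¹ : ℝ) : ℂ) •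
        (((Real.sin (θ - η * t) : ℝ) : ℂ) • σ + ((Real.sin (η * t) : ℝ) : ℂ) • w) :=
  stmt_5_general σ w hσ hw x hx0 hx1 hwσ hσw E θ η hθ hη H hH t
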